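/- arXiv:1107.4890 — 4 statements merged into one kernel-verified Lean document; each statement's English description precedes it below -/
import Mathlib

section
/- Let n and I be positive integers with n ≥ I·(I−1)·(√I + √(I−1))². Then the sequence x_i = ⌊√(n/i)⌋ for i = 1,…,I is strictly decreasing. -/
lemma floor_lt_floor_of_add_one_le {a b : ℝ} (ha : 0 ≤ a) (hab : a + 1 ≤ b) :
    ⌊a⌋₊ < ⌊b⌋₊ := by
  have h1 : ⌊a⌋₊ + 1 ≤ ⌊a + 1⌋₊ := by
    rw [Nat.floor_add_one ha]
  exact lt_of_lt_of_le (Nat.lt_of_lt_of_le (Nat.lt_succ_self _) h1)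
    (Nat.floor_le_floor hab)

lemma consec_step (n I i : ℕ) (hi : 1 ≤ i) (hiI : i + 1 ≤ I)
    (h : (I : ℝ) * ((I : ℝ) - 1) * (Real.sqrt I + Real.sqrt ((I : ℝ) - 1)) ^ 2 ≤ n) :
    Real.sqrt ((n : ℝ) / ((i : ℝ) + 1)) + 1 ≤ Real.sqrt ((n : ℝ) / (i : ℝ)) := by
  set s := Real.sqrt i with hs_def
  set t := Real.sqrt ((i : ℝ) + 1) with ht_def
  have hi1 : (1 : ℝ) ≤ (i : ℝ) := by exact_mod_cast hi
  have hiI' : (i : ℝ) + 1 ≤ (I : ℝ) := by exact_mod_cast hiI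
  have hs0 : 0 < s := Real.sqrt_pos.2 (by linarith)
  have ht0 : 0 < t := Real.sqrt_pos.2 (by linarith)
  have hs2 : s ^ 2 = (i : ℝ) := Real.sq_sqrt (by linarith)
  have ht2 : t ^ 2 = (i : ℝ) + 1 := Real.sq_sqrt (by linarith)
  have hst : s ≤ t := Real.sqrt_le_sqrt (by linarith)
  -- monotonicity of the bound
  have hmul : (i : ℝ) * ((i : ℝ) + 1) ≤ (I : ℝ) * ((I : ℝ) - 1) := by nlinarith
  have hsqI : t ≤ Real.sqrt I := Real.sqrt_le_sqrt (by linarith)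
  have hsqI' : s ≤ Real.sqrt ((I : ℝ) - 1) := Real.sqrt_le_sqrt (by linarith)
  have hsum : (t + s) ^ 2 ≤ (Real.sqrt I + Real.sqrt ((I : ℝ) - 1)) ^ 2 := by
    apply pow_le_pow_left₀ (by positivity)
    linarith
  have hbound : (i : ℝ) * ((i : ℝ) + 1) * (t + s) ^ 2 ≤ (n : ℝ) := by
    calc (i : ℝ) * ((i : ℝ) + 1) * (t + s) ^ 2
        ≤ (I : ℝ) * ((I : ℝ) - 1) * (Real.sqrt I + Real.sqrt ((I : ℝ) - 1)) ^ 2 := by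
          apply mul_le_mul hmul hsum (by positivity) (by nlinarith)
      _ ≤ (n : ℝ) := h
  have key : s * t * (t + s) ≤ Real.sqrt n := by
    apply Real.le_sqrt' (by positivity) |>.2
    have e : (s * t * (t + s)) ^ 2 = (i : ℝ) * ((i : ℝ) + 1) * (t + s) ^ 2 := by
      rw [mul_pow, mul_pow, hs2, ht2]
    linarith
  have hA : Real.sqrt ((n : ℝ) / (i : ℝ)) = Real.sqrt n / s := by
    rw [Real.sqrt_div (by positivity)]
  have hB : Real.sqrt ((n : ℝ) / ((i : ℝ) + 1)) = Real.sqrt n / t := by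
    rw [Real.sqrt_div (by positivity)]
  rw [hA, hB]
  have hts : (t - s) * (t + s) = 1 := by nlinarith
  have hdiff : (1 : ℝ) ≤ Real.sqrt n / s - Real.sqrt n / t := by
    have e : Real.sqrt n / s - Real.sqrt n / t = Real.sqrt n * (t - s) / (s * t) := by
      field_simp
    rw [e, le_div_iff₀ (by positivity), one_mul]
    calc s * t = s * t * (t + s) * (t - s) := by
          rw [show s * t * (t + s) * (t - s) = s * t * ((t - s) * (t + s)) from by ring,
            hts, mul_one]
      _ ≤ Real.sqrt n * (t - s) :=
          mul_le_mul_of_nonneg_right key (by linarith)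
  linarith

theorem xi_strict_decreasing (n I : ℕ) (hn : 0 < n) (hI : 0 < I)
    (h : (I : ℝ) * ((I : ℝ) - 1) * (Real.sqrt I + Real.sqrt ((I : ℝ) - 1)) ^ 2 ≤ n) :
    ∀ i j : ℕ, 1 ≤ i → i < j → j ≤ I →
      ⌊Real.sqrt ((n : ℝ) / (j : ℝ))⌋₊ < ⌊Real.sqrt ((n : ℝ) / (i : ℝ))⌋₊ := by
  intro i j hi hij hjI
  induction j, hij using Nat.le_induction with
  | base =>
    apply floor_lt_floor_of_add_one_le (Real.sqrt_nonneg _)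
    have := consec_step n I i hi (by omega) h
    push_cast
    convert this using 3
  | succ j hj ih =>
    have h1 : ⌊Real.sqrt ((n : ℝ) / ((j:ℕ) : ℝ))⌋₊ < ⌊Real.sqrt ((n : ℝ) / (i : ℝ))⌋₊ :=
      ih (by omega)
    have h2 : ⌊Real.sqrt ((n : ℝ) / (((j+1:ℕ)) : ℝ))⌋₊ < ⌊Real.sqrt ((n : ℝ) / ((j:ℕ) : ℝ))⌋₊ := by
      apply floor_lt_floor_of_add_one_le (Real.sqrt_nonneg _)
      have := consec_step n I j (by omega) (by omega) h
      push_cast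
      convert this using 3
    omega
end

section
/- If n, i, I are positive integers with I ≤ (n/4)^{1/3} and 1 ≤ i ≤ I−1, then the condition i = ⌊n/d²⌋ for a positive integer d is equivalent to ⌊√(n/(i+1))⌋ < d ≤ ⌊√(n/i)⌋. -/
theorem floor_quotient_iff (n i I d : ℕ) (hn : 0 < n) (hi : 0 < i) (hI : 0 < I) (hd : 0 < d)
    (hIle : (I : ℝ) ≤ ((n : ℝ) / 4) ^ ((1 : ℝ) / 3)) (hiI : i ≤ I - 1) :
    i = n / d ^ 2 ↔
      (⌊Real.sqrt ((n : ℝ) / ((i : ℝ) + 1))⌋₊ < d ∧ d ≤ ⌊Real.sqrt ((n : ℝ) / (i : ℝ))⌋₊) := by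
  have hd2 : 0 < d ^ 2 := by positivity
  have hi' : (0 : ℝ) < (i : ℝ) := by exact_mod_cast hi
  have hi1 : (0 : ℝ) < (i : ℝ) + 1 := by positivity
  have key : i = n / d ^ 2 ↔ (i * d ^ 2 ≤ n ∧ n < (i + 1) * d ^ 2) := by
    have A : i ≤ n / d ^ 2 ↔ i * d ^ 2 ≤ n := Nat.le_div_iff_mul_le hd2
    have B : n / d ^ 2 < i + 1 ↔ n < (i + 1) * d ^ 2 := Nat.div_lt_iff_lt_mul hd2
    omega
  rw [key]
  have h1 : ⌊Real.sqrt ((n : ℝ) / ((i : ℝ) + 1))⌋₊ < d ↔ n < (i + 1) * d ^ 2 := by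
    rw [Nat.floor_lt (Real.sqrt_nonneg _), show ((d : ℕ) : ℝ) = (d : ℝ) from rfl,
      Real.sqrt_lt' (by exact_mod_cast hd), div_lt_iff₀ hi1]
    constructor
    · intro h
      exact_mod_cast (by push_cast; linarith : (n : ℝ) < ((i + 1) * d ^ 2 : ℕ))
    · intro h
      have : (n : ℝ) < ((i + 1) * d ^ 2 : ℕ) := by exact_mod_cast h
      push_cast at this
      linarith
  have h2 : d ≤ ⌊Real.sqrt ((n : ℝ) / (i : ℝ))⌋₊ ↔ i * d ^ 2 ≤ n := by
    rw [Nat.le_floor_iff (Real.sqrt_nonneg _),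
      Real.le_sqrt (by positivity) (by positivity), le_div_iff₀ hi']
    constructor
    · intro h
      exact_mod_cast (by push_cast; linarith : ((i * d ^ 2 : ℕ) : ℝ) ≤ n)
    · intro h
      have : ((i * d ^ 2 : ℕ) : ℝ) ≤ n := by exact_mod_cast h
      push_cast at this
      linarith
  rw [h1, h2, and_comm]
end

section
/- Let n be a positive integer, I a positive integer with I ≤ (n/4)^{1/3}, and set x_i = ⌊√(n/i)⌋ for 1 ≤ i ≤ I and D = x_I. Then S(n) = ∑_{d=1}^{D} μ(d)·⌊n/d²⌋ + ∑_{i=1}^{I−1} M(x_i) − (I−1)·M(x_I). -/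
/-!
Since `∑_{d² ∣ m} μ(d)` is the indicator of square-freeness, `S(n) = ∑_{d ≤ n} μ(d) ⌊n/d²⌋`.
For `i, d ≥ 1` one has `d ≤ x_i ↔ i ≤ ⌊n/d²⌋`, so for `d > x_I` the weight `⌊n/d²⌋ < I`
counts the indices `1 ≤ i < I` with `d ≤ x_i`; swapping the two summations turns the tail
`d > x_I` into `∑_{i < I} (M(x_i) - M(x_I))`.
-/

open ArithmeticFunction Finset
open scoped ArithmeticFunction.Moebius

/-- Number of square-free positive integers not exceeding `n`. -/
def S (n : ℕ) : ℕ := ((Finset.Icc 1 n).filter Squarefree).card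

/-- The Mertens function `M(x) = ∑_{1 ≤ i ≤ x} μ(i)`. -/
def M (x : ℕ) : ℤ := ∑ i ∈ Finset.Icc 1 x, moebius i

lemma sum_Icc_one_add_sum_Ioc {R : Type*} [AddCommMonoid R] (f : ℕ → R) {a b : ℕ} (hab : a ≤ b) :
    ∑ i ∈ Icc 1 a, f i + ∑ i ∈ Ioc a b, f i = ∑ i ∈ Icc 1 b, f i := by
  simpa [← Icc_add_one_left_eq_Ioc] using sum_Ioc_consecutive f (Nat.zero_le a) hab

lemma Nat.sq_dvd_sq_mul_iff {a b d : ℕ} (ha : Squarefree a) (hb : b ≠ 0) :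
    d ^ 2 ∣ b ^ 2 * a ↔ d ∣ b := by
  refine ⟨fun h => ?_, fun h => (pow_dvd_pow_of_dvd h 2).mul_right a⟩
  have ha0 : a ≠ 0 := ha.ne_zero
  have hd : d ≠ 0 := by rintro rfl; simp_all
  rw [← Nat.factorization_le_iff_dvd hd hb]
  rw [← Nat.factorization_le_iff_dvd (by positivity) (by positivity)] at h
  intro p
  have hp := h p
  simp only [Nat.factorization_mul (pow_ne_zero 2 hb) ha0, Nat.factorization_pow,
    Finsupp.coe_add, Finsupp.coe_smul, Pi.add_apply, Pi.smul_apply, smul_eq_mul] at hp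
  have := ha.natFactorization_le_one p
  omega

-- Write `m = b² a` with `a` square-free: then `d² ∣ m ↔ d ∣ b`, and `b = 1` iff `m` is square-free.
lemma sum_moebius_sq_dvd {m : ℕ} (hm : 0 < m) :
    ∑ d ∈ m.divisors with d ^ 2 ∣ m, (μ d : ℤ) = if Squarefree m then 1 else 0 := by
  obtain ⟨a, b, -, hb, rfl, ha⟩ := Nat.sq_mul_squarefree_of_pos hm
  have hdiv : {d ∈ (b ^ 2 * a).divisors | d ^ 2 ∣ b ^ 2 * a} = b.divisors := by
    ext d
    simp only [mem_filter, Nat.mem_divisors, Nat.sq_dvd_sq_mul_iff ha hb.ne']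
    exact ⟨fun h => ⟨h.2, hb.ne'⟩,
      fun h => ⟨⟨h.1.trans ((Dvd.intro_left _ rfl).mul_right a), hm.ne'⟩, h.1⟩⟩
  have hsq : Squarefree (b ^ 2 * a) ↔ b = 1 := by
    refine ⟨fun h => Nat.isUnit_iff.mp (h b ⟨a, by ring⟩), ?_⟩
    rintro rfl
    simpa using ha
  rw [hdiv, ← coe_mul_zeta_apply, moebius_mul_coe_zeta, one_apply]
  exact if_congr hsq.symm rfl rfl

theorem S_eq_sum_moebius_mul_div_sq (n : ℕ) :
    (S n : ℤ) = ∑ d ∈ Icc 1 n, μ d * (n / d ^ 2 : ℕ) := by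
  calc (S n : ℤ) = ∑ m ∈ Icc 1 n, if Squarefree m then 1 else 0 := by simp [S]
    _ = ∑ m ∈ Icc 1 n, ∑ d ∈ m.divisors with d ^ 2 ∣ m, (μ d : ℤ) :=
        sum_congr rfl fun m hm => (sum_moebius_sq_dvd (mem_Icc.mp hm).1).symm
    _ = ∑ d ∈ Icc 1 n, ∑ m ∈ Ioc 0 n with d ^ 2 ∣ m, (μ d : ℤ) := by
        refine sum_comm' fun m d => ?_
        simp only [mem_Icc, mem_Ioc, mem_filter, Nat.mem_divisors]
        constructor
        · rintro ⟨hm, ⟨hdm, -⟩, hsq⟩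
          have := Nat.le_of_dvd (by omega) hdm
          have := Nat.pos_of_dvd_of_pos hdm (by omega)
          exact ⟨⟨⟨by omega, hm.2⟩, hsq⟩, by omega, by omega⟩
        · rintro ⟨⟨hm, hsq⟩, -⟩
          exact ⟨⟨hm.1, hm.2⟩, ⟨(Dvd.intro _ (sq d).symm).trans hsq, hm.1.ne'⟩, hsq⟩
    _ = ∑ d ∈ Icc 1 n, μ d * (n / d ^ 2 : ℕ) := by
        simp only [sum_const, Nat.Ioc_filter_dvd_card_eq_div, nsmul_eq_mul', Int.natCast_div]

section GaloisSwap

variable {x g : ℕ → ℕ}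

lemma antitoneOn_of_le_iff_le (hxg : ∀ d i, 0 < d → 0 < i → (d ≤ x i ↔ i ≤ g d)) :
    AntitoneOn x (Set.Ioi 0) := by
  intro i hi j hj hij
  rcases (x j).eq_zero_or_pos with h | h
  · simp [h]
  · exact (hxg _ _ h hi).2 (hij.trans ((hxg _ _ h hj).1 le_rfl))

lemma sum_Ioc_nsmul_eq_sum_sum_of_le_iff_le (hxg : ∀ d i, 0 < d → 0 < i → (d ≤ x i ↔ i ≤ g d))
    {R : Type*} [AddCommMonoid R] (f : ℕ → R) {I N : ℕ} (hI : 0 < I) (hxN : ∀ i, 0 < i → x i ≤ N) :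
    ∑ d ∈ Ioc (x I) N, g d • f d = ∑ i ∈ Icc 1 (I - 1), ∑ d ∈ Ioc (x I) (x i), f d := by
  calc ∑ d ∈ Ioc (x I) N, g d • f d = ∑ d ∈ Ioc (x I) N, ∑ _i ∈ Icc 1 (g d), f d := by
        simp
    _ = _ := by
      refine sum_comm' fun d i => ?_
      simp only [mem_Ioc, mem_Icc]
      constructor
      · rintro ⟨⟨hId, hdN⟩, hi, hig⟩
        have hgI : g d < I := not_le.mp fun h => by have := (hxg d I (by omega) hI).2 h; omega
        exact ⟨⟨hId, (hxg d i (by omega) hi).2 hig⟩, hi, by omega⟩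
      · rintro ⟨⟨hId, hdi⟩, hi, hiI⟩
        exact ⟨⟨hId, hdi.trans (hxN i hi)⟩, hi, (hxg d i (by omega) hi).1 hdi⟩

end GaloisSwap

lemma le_floor_sqrt_div_iff {n i d : ℕ} (hi : 0 < i) (hd : 0 < d) :
    d ≤ ⌊√((n : ℝ) / i)⌋₊ ↔ i ≤ n / d ^ 2 := by
  rw [Nat.le_floor_iff (Real.sqrt_nonneg _), Real.le_sqrt (by positivity) (by positivity),
    le_div_iff₀ (by positivity), Nat.le_div_iff_mul_le (by positivity), mul_comm]
  exact_mod_cast Iff.rfl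

lemma M_sub_M_eq_sum_Ioc {a b : ℕ} (hab : a ≤ b) : M b - M a = ∑ d ∈ Ioc a b, (μ d : ℤ) := by
  rw [M, M, ← sum_Icc_one_add_sum_Ioc _ hab, add_sub_cancel_left]

theorem squarefree_count_fast_formula_general (n I : ℕ) (hI : 0 < I)
    (x : ℕ → ℕ) (hx : ∀ i, x i = ⌊Real.sqrt ((n : ℝ) / (i : ℝ))⌋₊) :
    (S n : ℤ) = (∑ d ∈ Finset.Icc 1 (x I), moebius d * (n / d ^ 2 : ℕ)) +
      (∑ i ∈ Finset.Icc 1 (I - 1), M (x i)) - ((I : ℤ) - 1) * M (x I) := by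
  have hxg : ∀ d i, 0 < d → 0 < i → (d ≤ x i ↔ i ≤ n / d ^ 2) := fun d i hd hi => by
    rw [hx]; exact le_floor_sqrt_div_iff hi hd
  have hxn : ∀ i, 0 < i → x i ≤ n := fun i hi => by
    rcases (x i).eq_zero_or_pos with h | h
    · omega
    have : x i ^ 2 ≤ n := (Nat.div_pos_iff.mp (hi.trans_le ((hxg _ _ h hi).1 le_rfl))).2
    nlinarith
  have hxI : ∀ i ∈ Icc 1 (I - 1), x I ≤ x i := fun i hi => by
    simp only [mem_Icc] at hi
    exact antitoneOn_of_le_iff_le hxg (show 0 < i by omega) (show 0 < I from hI) (by omega)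
  have htail := sum_Ioc_nsmul_eq_sum_sum_of_le_iff_le hxg (fun d => (μ d : ℤ)) hI hxn
  simp only [nsmul_eq_mul'] at htail
  rw [S_eq_sum_moebius_mul_div_sq, ← sum_Icc_one_add_sum_Ioc _ (hxn I hI), htail,
    ← sum_congr rfl fun i hi => M_sub_M_eq_sum_Ioc (hxI i hi), sum_sub_distrib, sum_const,
    Nat.card_Icc, Nat.add_sub_cancel, nsmul_eq_mul, Nat.cast_pred hI]
  ring

theorem squarefree_count_fast_formula (n I : ℕ) (hn : 0 < n) (hI : 0 < I)
    (hIle : (I : ℝ) ≤ ((n : ℝ) / 4) ^ ((1 : ℝ) / 3))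
    (x : ℕ → ℕ) (hx : ∀ i, x i = ⌊Real.sqrt ((n : ℝ) / (i : ℝ))⌋₊) :
    (S n : ℤ) = (∑ d ∈ Finset.Icc 1 (x I), moebius d * (n / d ^ 2 : ℕ)) +
      (∑ i ∈ Finset.Icc 1 (I - 1), M (x i)) - ((I : ℤ) - 1) * M (x I) :=
  squarefree_count_fast_formula_general n I hI x hx
end

section
/- Let n be a positive integer and x_i = ⌊√(n/i)⌋. For 1 ≤ i < I with I ≤ (n/4)^{1/3}, if d ≥ 2 is an integer with ⌊x_i/d⌋ > x_I, then d²·i < I. -/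
theorem d_sq_i_lt_I (n i d I : ℕ) (hn : 0 < n) (hi : 1 ≤ i) (hiI : i < I) (hd : 2 ≤ d)
    (hIle : (I : ℝ) ≤ ((n : ℝ) / 4) ^ ((1 : ℝ) / 3))
    (h : ⌊Real.sqrt ((n : ℝ) / (I : ℝ))⌋₊ < ⌊Real.sqrt ((n : ℝ) / (i : ℝ))⌋₊ / d) :
    d ^ 2 * i < I := by
  have hd0 : 0 < d := by omega
  set A := Real.sqrt ((n : ℝ) / (i : ℝ)) with hAdef
  set B := Real.sqrt ((n : ℝ) / (I : ℝ)) with hBdef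
  have hA : (⌊A⌋₊ : ℝ) ≤ A := Nat.floor_le (Real.sqrt_nonneg _)
  have hB : B < (⌊B⌋₊ : ℝ) + 1 := Nat.lt_floor_add_one _
  have hmul : (⌊B⌋₊ + 1) * d ≤ ⌊A⌋₊ :=
    (Nat.le_div_iff_mul_le hd0).mp (Nat.succ_le_of_lt h)
  have hmulR : ((⌊B⌋₊ : ℝ) + 1) * d ≤ (⌊A⌋₊ : ℝ) := by exact_mod_cast hmul
  have hdpos : (0 : ℝ) < d := by exact_mod_cast hd0
  have hdB : (d : ℝ) * B < A := by
    have h1 : (d : ℝ) * B < (d : ℝ) * ((⌊B⌋₊ : ℝ) + 1) := by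
      exact mul_lt_mul_of_pos_left hB hdpos
    nlinarith [hA]
  have hBnn : (0 : ℝ) ≤ B := Real.sqrt_nonneg _
  have hsq : ((d : ℝ) * B) ^ 2 < A ^ 2 := by
    nlinarith [mul_nonneg hdpos.le hBnn]
  have hipos : (0 : ℝ) < i := by exact_mod_cast hi
  have hIpos : (0 : ℝ) < I := by exact_mod_cast (by omega : 0 < I)
  have hnpos : (0 : ℝ) < n := by exact_mod_cast hn
  have hA2 : A ^ 2 = (n : ℝ) / i := Real.sq_sqrt (by positivity)
  have hB2 : B ^ 2 = (n : ℝ) / I := Real.sq_sqrt (by positivity)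
  rw [mul_pow, hA2, hB2] at hsq
  have key : (d : ℝ) ^ 2 * i < I := by
    rw [mul_div_assoc'] at hsq
    rw [div_lt_div_iff₀ hIpos hipos] at hsq
    nlinarith
  exact_mod_cast key
end
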